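/- arXiv:1607.03816 — 2 statements merged into one kernel-verified Lean document; each statement's English description precedes it below -/
import Mathlib

section
/- Let Ω be a nodal domain of an L²-normalized eigenfunction φ and ψ the restriction of φ to Ω extended by zero, so that the Rayleigh quotient of ψ equals λ₁(Ω). Given a finite collection of cubes {δK_{ij}} covering Ω, with each point in at most κ_δ of them, and with τ := ∫_{Ω∩Γ} φ² / ∫_Ω φ² (Γ the union of good cubes), there exists a good cube K_{i₀j₀} such that the local Rayleigh quotient ∫_{δK_{i₀j₀}} |∇ψ|² / ∫_{δK_{i₀j₀}} |ψ|² is at most (κ_δ/τ)·λ₁(Ω). -/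
/-
Sum the two inequalities over the good cubes `G`. Bounded overlap gives
`∑_{i ∈ G} ∫_{δK i} |∇ψ|² ≤ κ ∫_Ω |∇ψ|² = κ λ₁ ∫_Ω ψ²`, and since the good cubes
`K i ⊆ δK i` cover `Γ`, `τ ∫_Ω ψ² ≤ ∑_{i ∈ G} ∫_{δK i} ψ²`. Hence the sum of the local
gradient energies is at most `(κ/τ) λ₁` times the sum of the local masses, so some
summand obeys the same bound.
-/

open Finset

lemma Set.indicator_biUnion_le_sum_indicator {α ι β : Type*} [AddCommMonoid β] [PartialOrder β]
    [IsOrderedAddMonoid β] {f : α → β} {s : Finset ι} {A : ι → Set α} (hf : 0 ≤ f) (x : α) :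
    (⋃ i ∈ s, A i).indicator f x ≤ ∑ i ∈ s, (A i).indicator f x := by
  have hterm_nonneg : ∀ i ∈ s, 0 ≤ (A i).indicator f x :=
    fun i _ ↦ Set.indicator_nonneg (fun y _ ↦ hf y) x
  by_cases hx : x ∈ ⋃ i ∈ s, A i
  · obtain ⟨i, hi, hxi⟩ := Set.mem_iUnion₂.mp hx
    rw [Set.indicator_of_mem hx, ← Set.indicator_of_mem hxi f]
    exact single_le_sum hterm_nonneg hi
  · rw [Set.indicator_of_notMem hx]
    exact sum_nonneg hterm_nonneg

namespace MeasureTheory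

variable {α ι : Type*} [MeasurableSpace α] {μ : Measure α} {f : α → ℝ} {s : Finset ι}
  {A : ι → Set α}

lemma integral_sum_indicator {E : Type*} [NormedAddCommGroup E] [NormedSpace ℝ E] {g : α → E}
    (hg : Integrable g μ) (hA : ∀ i, MeasurableSet (A i)) :
    ∫ x, ∑ i ∈ s, (A i).indicator g x ∂μ = ∑ i ∈ s, ∫ x in A i, g x ∂μ := by
  rw [integral_finsetSum s fun i _ ↦ hg.indicator (hA i)]
  exact sum_congr rfl fun i _ ↦ integral_indicator (hA i)

open scoped Classical in
lemma sum_setIntegral_le_mul_integral_of_card_le (hf0 : 0 ≤ f) (hf : Integrable f μ)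
    (hA : ∀ i, MeasurableSet (A i)) {κ : ℕ} (hκ : ∀ x, #{i ∈ s | x ∈ A i} ≤ κ) :
    ∑ i ∈ s, ∫ x in A i, f x ∂μ ≤ κ * ∫ x, f x ∂μ := by
  have hpointwise (x : α) : ∑ i ∈ s, (A i).indicator f x ≤ κ * f x := by
    rw [sum_indicator_eq_sum_filter s (fun _ ↦ f) A (fun _ ↦ x), sum_const, nsmul_eq_mul]
    gcongr
    · exact hf0 x
    · exact hκ x
  calc ∑ i ∈ s, ∫ x in A i, f x ∂μ = ∫ x, ∑ i ∈ s, (A i).indicator f x ∂μ :=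
        (integral_sum_indicator hf hA).symm
    _ ≤ ∫ x, κ * f x ∂μ :=
        integral_mono (integrable_finsetSum s fun i _ ↦ hf.indicator (hA i))
          (hf.const_mul _) hpointwise
    _ = κ * ∫ x, f x ∂μ := integral_const_mul _ _

lemma setIntegral_le_sum_setIntegral_of_subset_biUnion (hf0 : 0 ≤ f) (hf : Integrable f μ)
    (hA : ∀ i, MeasurableSet (A i)) {S : Set α} (hS : S ⊆ ⋃ i ∈ s, A i) :
    ∫ x in S, f x ∂μ ≤ ∑ i ∈ s, ∫ x in A i, f x ∂μ := by
  have hU : MeasurableSet (⋃ i ∈ s, A i) := s.measurableSet_biUnion fun i _ ↦ hA i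
  calc ∫ x in S, f x ∂μ ≤ ∫ x in ⋃ i ∈ s, A i, f x ∂μ :=
        setIntegral_mono_set hf.integrableOn (ae_of_all _ hf0) hS.eventuallyLE
    _ = ∫ x, (⋃ i ∈ s, A i).indicator f x ∂μ := (integral_indicator hU).symm
    _ ≤ ∫ x, ∑ i ∈ s, (A i).indicator f x ∂μ :=
        integral_mono_of_nonneg (ae_of_all _ (Set.indicator_nonneg fun y _ ↦ hf0 y))
          (integrable_finsetSum s fun i _ ↦ hf.indicator (hA i))
          (ae_of_all _ (Set.indicator_biUnion_le_sum_indicator hf0))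
    _ = ∑ i ∈ s, ∫ x in A i, f x ∂μ := integral_sum_indicator hf hA

end MeasureTheory

open MeasureTheory

theorem exists_good_cube_small_local_rayleigh_general
    {M : Type*} [MeasurableSpace M] (μ : Measure M)
    (φ ψ gradsq : M → ℝ) (Ω : Set M)
    (hgrad_nonneg : 0 ≤ gradsq)
    (hgrad_supp : ∀ x ∉ Ω, gradsq x = 0)
    (hgrad_int : Integrable gradsq μ) (hψ_int : Integrable (fun x => ψ x ^ 2) μ)
    (lam₁ : ℝ) (hlam₁ : 0 < lam₁)
    (hRayleigh : ∫ x in Ω, gradsq x ∂μ = lam₁ * ∫ x in Ω, ψ x ^ 2 ∂μ)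
    (m : ℕ) (K δK : Fin m → Set M)
    (hδKmeas : ∀ i, MeasurableSet (δK i))
    (hsub : ∀ i, K i ⊆ δK i)
    (κ : ℕ)
    (hoverlap : ∀ x : M, Set.ncard {i : Fin m | x ∈ δK i} ≤ κ)
    (γ : ℝ)
    (τ : ℝ) (hτ : 0 < τ)
    (hψΩpos : 0 < ∫ x in Ω, ψ x ^ 2 ∂μ)
    (hΓ : τ * ∫ x in Ω, ψ x ^ 2 ∂μ ≤
      ∫ x in (⋃ i ∈ {i : Fin m |
          ∫ y in δK i, φ y ^ 2 ∂μ ≤ γ * ∫ y in K i, φ y ^ 2 ∂μ}, K i) ∩ Ω,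
        ψ x ^ 2 ∂μ) :
    ∃ i₀ : Fin m,
      (∫ y in δK i₀, φ y ^ 2 ∂μ ≤ γ * ∫ y in K i₀, φ y ^ 2 ∂μ) ∧
      ∫ x in δK i₀, gradsq x ∂μ ≤ (κ / τ) * lam₁ * ∫ x in δK i₀, ψ x ^ 2 ∂μ := by
  classical
  set A := ∫ x in Ω, ψ x ^ 2 ∂μ
  set G : Finset (Fin m) := {i | ∫ y in δK i, φ y ^ 2 ∂μ ≤ γ * ∫ y in K i, φ y ^ 2 ∂μ}
  have hmass : τ * A ≤ ∑ i ∈ G, ∫ x in δK i, ψ x ^ 2 ∂μ := by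
    refine hΓ.trans (setIntegral_le_sum_setIntegral_of_subset_biUnion
      (fun x ↦ sq_nonneg (ψ x)) hψ_int hδKmeas ?_)
    rintro x ⟨hx, -⟩
    obtain ⟨i, hi, hxi⟩ := Set.mem_iUnion₂.mp hx
    exact Set.mem_biUnion (by simpa [G] using hi) (hsub i hxi)
  have henergy : ∑ i ∈ G, ∫ x in δK i, gradsq x ∂μ ≤ κ * (lam₁ * A) := by
    rw [← hRayleigh, setIntegral_eq_integral_of_forall_compl_eq_zero hgrad_supp]
    refine sum_setIntegral_le_mul_integral_of_card_le hgrad_nonneg hgrad_int hδKmeas fun x ↦ ?_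
    exact (Set.ncard_coe_finset _).symm.trans_le
      ((Set.ncard_le_ncard fun i hi ↦ (mem_filter.1 hi).2).trans (hoverlap x))
  have hG : G.Nonempty := nonempty_of_sum_ne_zero (mul_pos hτ hψΩpos |>.trans_le hmass).ne'
  obtain ⟨i, hi, hle⟩ := exists_le_of_sum_le hG <| calc
    ∑ i ∈ G, ∫ x in δK i, gradsq x ∂μ ≤ κ * (lam₁ * A) := henergy
    _ = (κ / τ) * lam₁ * (τ * A) := by field_simp
    _ ≤ (κ / τ) * lam₁ * ∑ i ∈ G, ∫ x in δK i, ψ x ^ 2 ∂μ := by gcongr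
    _ = ∑ i ∈ G, (κ / τ) * lam₁ * ∫ x in δK i, ψ x ^ 2 ∂μ := mul_sum _ _ _
  exact ⟨i, by simpa [G] using hi, hle⟩

/-- Existence of a good cube with controlled local Rayleigh quotient: if
`ψ = φ·1_Ω` satisfies `∫_Ω |∇ψ|² = λ₁ ∫_Ω ψ²` (with `gradsq = |∇ψ|²`), the dilated
cubes `δK i` cover `Ω` with overlap at most `κ`, and the union `Γ` of `γ`-good
cubes captures a fraction `τ` of `∫_Ω ψ²`, then some good cube `K i₀` has local
Rayleigh quotient `∫_{δK i₀} |∇ψ|² ≤ (κ/τ)·λ₁·∫_{δK i₀} ψ²`. -/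
theorem exists_good_cube_small_local_rayleigh
    {M : Type*} [MeasurableSpace M] (μ : Measure M)
    (φ ψ gradsq : M → ℝ) (Ω : Set M) (hΩ : MeasurableSet Ω)
    (hψ : ψ = Ω.indicator φ)
    (hgrad_nonneg : 0 ≤ gradsq)
    (hgrad_supp : ∀ x ∉ Ω, gradsq x = 0)
    (hgrad_int : Integrable gradsq μ) (hψ_int : Integrable (fun x => ψ x ^ 2) μ)
    (lam₁ : ℝ) (hlam₁ : 0 < lam₁)
    (hRayleigh : ∫ x in Ω, gradsq x ∂μ = lam₁ * ∫ x in Ω, ψ x ^ 2 ∂μ)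
    (m : ℕ) (K δK : Fin m → Set M)
    (hKmeas : ∀ i, MeasurableSet (K i)) (hδKmeas : ∀ i, MeasurableSet (δK i))
    (hsub : ∀ i, K i ⊆ δK i)
    (hcover : Ω ⊆ ⋃ i, δK i)
    (κ : ℕ) (hκ : 1 ≤ κ)
    (hoverlap : ∀ x : M, Set.ncard {i : Fin m | x ∈ δK i} ≤ κ)
    (γ : ℝ) (hγ : 0 < γ)
    (τ : ℝ) (hτ : 0 < τ) (hτ1 : τ ≤ 1)
    (hψΩpos : 0 < ∫ x in Ω, ψ x ^ 2 ∂μ)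
    (hΓ : τ * ∫ x in Ω, ψ x ^ 2 ∂μ ≤
      ∫ x in (⋃ i ∈ {i : Fin m |
          ∫ y in δK i, φ y ^ 2 ∂μ ≤ γ * ∫ y in K i, φ y ^ 2 ∂μ}, K i) ∩ Ω,
        ψ x ^ 2 ∂μ) :
    ∃ i₀ : Fin m,
      (∫ y in δK i₀, φ y ^ 2 ∂μ ≤ γ * ∫ y in K i₀, φ y ^ 2 ∂μ) ∧
      ∫ x in δK i₀, gradsq x ∂μ ≤ (κ / τ) * lam₁ * ∫ x in δK i₀, ψ x ^ 2 ∂μ :=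
  exists_good_cube_small_local_rayleigh_general μ φ ψ gradsq Ω hgrad_nonneg hgrad_supp hgrad_int
    hψ_int lam₁ hlam₁ hRayleigh m K δK hδKmeas hsub κ hoverlap γ τ hτ hψΩpos hΓ
end

section
/- Energy corollary (conditional): assume the main theorem inrad(Ω) ≥ C·γ^{(2−n)/n}·τ^{1/2}·λ^{−1/2} holds for any admissible choice of γ (with τ the good-set L² fraction, and with ∫_Γ φ² ≥ 1 − κ_δ/γ). Choosing γ = 4κ_δ/‖φ‖²_{L²(Ω)} yields τ ≥ 1/4 and hence inrad(Ω) ≥ C'·‖φ‖_{L²(Ω)}^{2(n−2)/n}·λ^{−1/2}. -/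
/-!
With `γ = 4κ/E²` the good set `Γ γ` misses at most `E²/4` of the unit mass of `φ²`, so it keeps
at least `3E²/4` of the mass `E²` on `Ω`; hence `τ = 1/4` is admissible in the main theorem, and
`γ ^ ((2 - n)/n)` splits into `(4κ) ^ ((2 - n)/n) * E ^ (2(n - 2)/n)`.
-/

open MeasureTheory

theorem setIntegral_add_setIntegral_le_integral_add_setIntegral_inter {M : Type*}
    [MeasurableSpace M] {μ : Measure M} {f : M → ℝ} {s t : Set M} (ht : MeasurableSet t)
    (hf : Integrable f μ) (hf_nonneg : 0 ≤ᵐ[μ] f) :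
    ∫ x in s, f x ∂μ + ∫ x in t, f x ∂μ ≤ ∫ x, f x ∂μ + ∫ x in s ∩ t, f x ∂μ := by
  have hs_split : ∫ x in s ∩ t, f x ∂μ + ∫ x in s \ t, f x ∂μ = ∫ x in s, f x ∂μ :=
    integral_inter_add_sdiff ht hf.integrableOn
  have ht_split : ∫ x in t, f x ∂μ + ∫ x in tᶜ, f x ∂μ = ∫ x, f x ∂μ :=
    integral_add_compl ht hf
  have hdiff_le : ∫ x in s \ t, f x ∂μ ≤ ∫ x in tᶜ, f x ∂μ :=
    setIntegral_mono_set hf.integrableOn (ae_restrict_of_ae hf_nonneg)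
      (Filter.Eventually.of_forall fun _ hx => hx.2)
  linarith

theorem Real.div_sq_rpow {a E : ℝ} (ha : 0 ≤ a) (hE : 0 ≤ E) (p : ℝ) :
    (a / E ^ 2) ^ p = a ^ p * E ^ (-2 * p) := by
  rw [Real.div_rpow ha (sq_nonneg E), ← Real.rpow_natCast E 2, ← Real.rpow_mul hE,
    div_eq_mul_inv, ← Real.rpow_neg hE]
  push_cast
  ring_nf

theorem energy_inradius_corollary_general
    {M : Type*} [MeasurableSpace M] (μ : Measure M) (φ : M → ℝ)
    (n : ℕ)
    (Ω : Set M)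
    (Γ : ℝ → Set M) (hΓmeas : ∀ γ, MeasurableSet (Γ γ))
    (κ : ℝ) (hκ : 1 ≤ κ)
    (lam C inrad E : ℝ)
    (hE : 0 < E)
    (hint : Integrable (fun x => φ x ^ 2) μ)
    (hnorm : ∫ x, φ x ^ 2 ∂μ = 1)
    (hEΩ : ∫ x in Ω, φ x ^ 2 ∂μ = E ^ 2)
    (hGamma : ∀ γ : ℝ, 0 < γ → 1 - κ / γ ≤ ∫ x in Γ γ, φ x ^ 2 ∂μ)
    (hmain : ∀ γ : ℝ, 0 < γ → ∀ τ : ℝ, 0 < τ →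
      τ * ∫ x in Ω, φ x ^ 2 ∂μ ≤ ∫ x in Ω ∩ Γ γ, φ x ^ 2 ∂μ →
      C * γ ^ ((2 - (n : ℝ)) / n) * τ ^ ((1 : ℝ) / 2) * lam ^ (-(1 : ℝ) / 2)
        ≤ inrad) :
    C * (4 * κ) ^ ((2 - (n : ℝ)) / n) * ((1 : ℝ) / 4) ^ ((1 : ℝ) / 2) *
        E ^ (2 * ((n : ℝ) - 2) / n) * lam ^ (-(1 : ℝ) / 2) ≤ inrad := by
  set γ : ℝ := 4 * κ / E ^ 2 with hγ_def
  have hγ : 0 < γ := by positivity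
  have hκγ : κ / γ = E ^ 2 / 4 := by
    rw [hγ_def]
    field_simp
  have hinter : ∫ x in Ω, φ x ^ 2 ∂μ + ∫ x in Γ γ, φ x ^ 2 ∂μ
      ≤ ∫ x, φ x ^ 2 ∂μ + ∫ x in Ω ∩ Γ γ, φ x ^ 2 ∂μ :=
    setIntegral_add_setIntegral_le_integral_add_setIntegral_inter (hΓmeas γ) hint
      (Filter.Eventually.of_forall fun x => sq_nonneg (φ x))
  have hτ : (1 / 4 : ℝ) * ∫ x in Ω, φ x ^ 2 ∂μ ≤ ∫ x in Ω ∩ Γ γ, φ x ^ 2 ∂μ := by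
    have := hGamma γ hγ
    rw [hκγ] at this
    linarith [sq_nonneg E]
  have hγ_rpow : γ ^ ((2 - (n : ℝ)) / n)
      = (4 * κ) ^ ((2 - (n : ℝ)) / n) * E ^ (2 * ((n : ℝ) - 2) / n) := by
    rw [Real.div_sq_rpow (by positivity) hE.le]
    ring_nf
  calc C * (4 * κ) ^ ((2 - (n : ℝ)) / n) * ((1 : ℝ) / 4) ^ ((1 : ℝ) / 2)
        * E ^ (2 * ((n : ℝ) - 2) / n) * lam ^ (-(1 : ℝ) / 2)
      = C * γ ^ ((2 - (n : ℝ)) / n) * ((1 : ℝ) / 4) ^ ((1 : ℝ) / 2) * lam ^ (-(1 : ℝ) / 2) := by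
        rw [hγ_rpow]; ring
    _ ≤ inrad := hmain γ hγ (1 / 4) (by norm_num) hτ

/-- Energy corollary, conditional form: assume the main inradius theorem holds for
every admissible good-cube parameter `γ` (with `Γ γ` the corresponding good set
satisfying `∫_{Γ γ} φ² ≥ 1 − κ/γ`).  Choosing `γ = 4κ/E²`, where
`E = ‖φ‖_{L²(Ω)}`, yields `inrad(Ω) ≥ C·(4κ)^{(2−n)/n}·(1/4)^{1/2}·E^{2(n−2)/n}/√λ`. -/
theorem energy_inradius_corollary
    {M : Type*} [MeasurableSpace M] (μ : Measure M) (φ : M → ℝ)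
    (n : ℕ) (hn : 3 ≤ n)
    (Ω : Set M) (hΩ : MeasurableSet Ω)
    (Γ : ℝ → Set M) (hΓmeas : ∀ γ, MeasurableSet (Γ γ))
    (κ : ℝ) (hκ : 1 ≤ κ)
    (lam C inrad E : ℝ) (hlam : 0 < lam) (hC : 0 < C)
    (hE : 0 < E) (hE1 : E ≤ 1)
    (hint : Integrable (fun x => φ x ^ 2) μ)
    (hnorm : ∫ x, φ x ^ 2 ∂μ = 1)
    (hEΩ : ∫ x in Ω, φ x ^ 2 ∂μ = E ^ 2)
    (hGamma : ∀ γ : ℝ, 0 < γ → 1 - κ / γ ≤ ∫ x in Γ γ, φ x ^ 2 ∂μ)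
    (hmain : ∀ γ : ℝ, 0 < γ → ∀ τ : ℝ, 0 < τ →
      τ * ∫ x in Ω, φ x ^ 2 ∂μ ≤ ∫ x in Ω ∩ Γ γ, φ x ^ 2 ∂μ →
      C * γ ^ ((2 - (n : ℝ)) / n) * τ ^ ((1 : ℝ) / 2) * lam ^ (-(1 : ℝ) / 2)
        ≤ inrad) :
    C * (4 * κ) ^ ((2 - (n : ℝ)) / n) * ((1 : ℝ) / 4) ^ ((1 : ℝ) / 2) *
        E ^ (2 * ((n : ℝ) - 2) / n) * lam ^ (-(1 : ℝ) / 2) ≤ inrad :=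
  energy_inradius_corollary_general μ φ n Ω Γ hΓmeas κ hκ lam C inrad E hE hint hnorm hEΩ hGamma
    hmain
end
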